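/- (Existence and uniqueness for the three-phase Stefan problem with Robin condition, reduced form.) Assume α₂ > α₃, A∞ > B, and h₀ > h₂, where h₂ := ((B−C)/(A∞−B))·√(k₂·k₃·c₂/(π·c₃·α₃))·(1/erf(z₀·√(α₁/α₂))). Then there exists a unique ξ₁ > z₀ such that Q(ξ₁) = T(ξ₂), where ξ₂ ≥ 0 is the unique number satisfying erf(ξ₂·√(α₁/α₂)) = H(ξ₁). -/

import Mathlib

noncomputable section

/-- The error function `erf x = (2/√π) ∫₀ˣ exp(−s²) ds`. -/
def erf (x : ℝ) : ℝ := (2 / Real.sqrt Real.pi) * ∫ s in (0:ℝ)..x, Real.exp (-(s^2))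

/-- The complementary error function. -/
def erfc (x : ℝ) : ℝ := 1 - erf x

/-- Physical data of the three-phase Stefan problem: positive thermal conductivities,
specific heats, mass density, latent heats, and temperatures `B > C > D`. -/
structure Params where
  k₁ : ℝ
  k₂ : ℝ
  k₃ : ℝ
  c₁ : ℝ
  c₂ : ℝ
  c₃ : ℝ
  ρ : ℝ
  ℓ₁ : ℝ
  ℓ₂ : ℝ
  B : ℝ
  C : ℝ
  D : ℝ
  hk₁ : 0 < k₁
  hk₂ : 0 < k₂
  hk₃ : 0 < k₃
  hc₁ : 0 < c₁
  hc₂ : 0 < c₂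
  hc₃ : 0 < c₃
  hρ : 0 < ρ
  hℓ₁ : 0 < ℓ₁
  hℓ₂ : 0 < ℓ₂
  hBC : C < B
  hCD : D < C

namespace Params

/-- Thermal diffusivity of phase 1. -/
def α₁ (p : Params) : ℝ := p.k₁ / (p.ρ * p.c₁)

/-- Thermal diffusivity of phase 2. -/
def α₂ (p : Params) : ℝ := p.k₂ / (p.ρ * p.c₂)

/-- Thermal diffusivity of phase 3. -/
def α₃ (p : Params) : ℝ := p.k₃ / (p.ρ * p.c₃)

/-- Stefan number `Ste₁ = c₁(C−D)/ℓ₁`. -/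
def Ste₁ (p : Params) : ℝ := p.c₁ * (p.C - p.D) / p.ℓ₁

/-- Stefan number `Ste₂ = c₂(B−C)/ℓ₂`. -/
def Ste₂ (p : Params) : ℝ := p.c₂ * (p.B - p.C) / p.ℓ₂

/-- `φ(z) = z + (Ste₁/√π) exp(−z²)/erfc(z)`. -/
def φ (p : Params) (z : ℝ) : ℝ :=
  z + (p.Ste₁ / Real.sqrt Real.pi) * Real.exp (-(z^2)) / erfc z

/-- `H(z) = erf(z√(α₁/α₂)) − (Ste₂/√π)(ℓ₂/ℓ₁)√(k₂c₁/(k₁c₂)) exp(−z²α₁/α₂)/φ(z)`. -/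
def H (p : Params) (z : ℝ) : ℝ :=
  erf (z * Real.sqrt (p.α₁ / p.α₂)) -
    (p.Ste₂ / Real.sqrt Real.pi) * (p.ℓ₂ / p.ℓ₁) *
      Real.sqrt (p.k₂ * p.c₁ / (p.k₁ * p.c₂)) *
      (Real.exp (-(z^2) * (p.α₁ / p.α₂)) / p.φ z)

/-- `Q(z) = (ℓ₁/ℓ₂) φ(z) exp(z² α₁/α₂)`. -/
def Q (p : Params) (z : ℝ) : ℝ :=
  (p.ℓ₁ / p.ℓ₂) * p.φ z * Real.exp (z^2 * (p.α₁ / p.α₂))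

/-- The function `T` arising from the Robin (convective) boundary condition with
heat-transfer coefficient `h₀` and bulk temperature `Ainf`. -/
def T (p : Params) (h₀ Ainf : ℝ) (z : ℝ) : ℝ :=
  (p.Ste₂ / (Real.sqrt Real.pi * p.c₂)) * ((Ainf - p.B) / (p.B - p.C)) *
    Real.sqrt (p.k₃ * p.c₁ * p.c₃ / p.k₁) *
    (Real.exp (-(z^2) * p.α₁ * (1 / p.α₃ - 1 / p.α₂)) /
      (p.k₃ / (h₀ * Real.sqrt (Real.pi * p.α₃)) + erf (z * Real.sqrt (p.α₁ / p.α₃)))) -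
  z * Real.exp (z^2 * (p.α₁ / p.α₂))

/-- The function `V` arising from the Dirichlet boundary condition with temperature `A`. -/
def V (p : Params) (A : ℝ) (z : ℝ) : ℝ :=
  ((A - p.B) / p.ℓ₂) * Real.sqrt (p.c₁ * p.c₃ * p.k₃ / (Real.pi * p.k₁)) *
    (Real.exp (-(z^2) * (p.α₁ / p.α₃ - p.α₁ / p.α₂)) / erf (z * Real.sqrt (p.α₁ / p.α₃))) -
  z * Real.exp (z^2 * (p.α₁ / p.α₂))

/-- The function `P` arising from the Neumann boundary condition with flux coefficient `q₀`. -/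
def P (p : Params) (q₀ : ℝ) (z : ℝ) : ℝ :=
  Real.exp (z^2 * (p.α₁ / p.α₂)) *
    (-z + (q₀ / p.ℓ₂) * Real.sqrt (p.c₁ / (p.ρ * p.k₁)) * Real.exp (-(z^2) * (p.α₁ / p.α₃)))

/-- Critical heat-transfer coefficient `h₂`. -/
def h2 (p : Params) (Ainf z₀ : ℝ) : ℝ :=
  ((p.B - p.C) / (Ainf - p.B)) *
    Real.sqrt (p.k₂ * p.k₃ * p.c₂ / (Real.pi * p.c₃ * p.α₃)) *
    (1 / erf (z₀ * Real.sqrt (p.α₁ / p.α₂)))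

/-- Critical heat-flux coefficient `q₂`. -/
def q2 (p : Params) (z₀ : ℝ) : ℝ :=
  p.k₂ * (p.B - p.C) / (Real.sqrt (p.α₂ * Real.pi) * erf (z₀ * Real.sqrt (p.α₁ / p.α₂)))

end Params

/-!
For `ξ₁ ≥ z₀` the number `ξ₂` exists by the intermediate value theorem, as
`0 = H z₀ ≤ H ξ₁ < erf (ξ₁ √(α₁/α₂))`, and it is unique and depends continuously and monotonically
on `ξ₁` because `erf` is continuous and strictly increasing. It remains to find the zeros of
`F ξ₁ = Q ξ₁ − T (ξ₂ ξ₁)` on `(z₀, ∞)`. `Q` is strictly increasing, by the Gaussian tail bound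
`z erfc z ≤ e^{-z²}/√π`, which makes `e^{z²} erfc z` decreasing, and `T` is strictly decreasing
when `α₃ ≤ α₂`; so `F` is strictly increasing. Finally `F z₀ = Q z₀ − T 0 < 0` is a rewriting of
`h₀ > h₂`, and `F → ∞` because `Q z ≥ (ℓ₁/ℓ₂) z`.
-/

open MeasureTheory Filter Real Set

lemma integrable_exp_neg_sq : Integrable fun s : ℝ => exp (-(s ^ 2)) := by
  simpa using integrable_exp_neg_mul_sq one_pos

lemma hasDerivAt_erf (x : ℝ) : HasDerivAt erf (2 / √π * exp (-(x ^ 2))) x := by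
  have hc : Continuous fun s : ℝ => exp (-(s ^ 2)) := by fun_prop
  exact (intervalIntegral.integral_hasDerivAt_right integrable_exp_neg_sq.intervalIntegrable
    (hc.stronglyMeasurableAtFilter _ _) hc.continuousAt).const_mul _

lemma continuous_erf : Continuous erf :=
  continuous_iff_continuousAt.2 fun x => (hasDerivAt_erf x).continuousAt

@[simp] lemma erf_zero : erf 0 = 0 := by simp [erf]

lemma erf_strictMono : StrictMono erf :=
  strictMono_of_hasDerivAt_pos hasDerivAt_erf fun _ => by positivity

lemma erf_pos {x : ℝ} (hx : 0 < x) : 0 < erf x := erf_zero ▸ erf_strictMono hx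

lemma erf_nonneg {x : ℝ} (hx : 0 ≤ x) : 0 ≤ erf x := erf_zero ▸ erf_strictMono.monotone hx

lemma erfc_eq_integral_Ioi (x : ℝ) : erfc x = 2 / √π * ∫ s in Ioi x, exp (-(s ^ 2)) := by
  have hI := integrable_exp_neg_sq.integrableOn (s := Iic x)
  have hsplit := intervalIntegral.integral_Iic_sub_Iic (f := fun s : ℝ => exp (-(s ^ 2)))
    (a := 0) (b := x) integrable_exp_neg_sq.integrableOn hI
  have h0 := intervalIntegral.integral_Iic_add_Ioi (b := 0)
    integrable_exp_neg_sq.integrableOn integrable_exp_neg_sq.integrableOn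
  have hx := intervalIntegral.integral_Iic_add_Ioi (b := x)
    integrable_exp_neg_sq.integrableOn integrable_exp_neg_sq.integrableOn
  have hhalf : ∫ s in Ioi (0 : ℝ), exp (-(s ^ 2)) = √π / 2 := by
    simpa using integral_gaussian_Ioi 1
  rw [erfc, erf, ← hsplit]
  field_simp
  linarith

lemma erfc_pos (x : ℝ) : 0 < erfc x := by
  have : 0 < ∫ s in Ioi x, exp (-(s ^ 2)) := by
    rw [setIntegral_pos_iff_support_of_nonneg_ae (.of_forall fun _ => (exp_pos _).le)
      integrable_exp_neg_sq.integrableOn]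
    simp [Function.support, exp_ne_zero]
  rw [erfc_eq_integral_Ioi]
  positivity

lemma integral_Ioi_mul_exp_neg_sq (z : ℝ) :
    ∫ s in Ioi z, s * exp (-(s ^ 2)) = exp (-(z ^ 2)) / 2 := by
  have hderiv (s : ℝ) : HasDerivAt (fun s : ℝ => -exp (-(s ^ 2)) / 2) (s * exp (-(s ^ 2))) s := by
    refine ((hasDerivAt_pow 2 s).fun_neg.exp.fun_neg.div_const 2).congr_deriv ?_
    simp only [Nat.cast_ofNat]
    ring
  have hlim : Tendsto (fun s : ℝ => -exp (-(s ^ 2)) / 2) atTop (nhds 0) := by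
    have := (tendsto_exp_atBot.comp (tendsto_neg_atTop_atBot.comp
      (tendsto_pow_atTop two_ne_zero))).neg.div_const 2
    simpa using this
  rw [integral_Ioi_of_hasDerivAt_of_tendsto' (fun s _ => hderiv s)
    (by simpa using (integrable_mul_exp_neg_mul_sq one_pos).integrableOn) hlim]
  ring

-- The bound `z ∫_z^∞ e^{-s²} ≤ ∫_z^∞ s e^{-s²}` needs no sign condition on `z`.
lemma mul_erfc_le (z : ℝ) : z * erfc z ≤ exp (-(z ^ 2)) / √π := by
  have hI := integrable_exp_neg_sq.integrableOn (s := Ioi z)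
  have htail : z * ∫ s in Ioi z, exp (-(s ^ 2)) ≤ exp (-(z ^ 2)) / 2 := by
    rw [← integral_Ioi_mul_exp_neg_sq, ← integral_const_mul]
    refine setIntegral_mono_on (hI.const_mul z)
      (by simpa using (integrable_mul_exp_neg_mul_sq one_pos).integrableOn) measurableSet_Ioi
      fun s hs => mul_le_mul_of_nonneg_right (le_of_lt hs) (exp_pos _).le
  have hπ : √π ≠ 0 := by positivity
  calc z * erfc z = 2 * (z * ∫ s in Ioi z, exp (-(s ^ 2))) / √π := by
        rw [erfc_eq_integral_Ioi]; field_simp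
    _ ≤ exp (-(z ^ 2)) / √π := by gcongr; linarith

def erfcx (z : ℝ) : ℝ := exp (z ^ 2) * erfc z

lemma erfcx_pos (z : ℝ) : 0 < erfcx z := mul_pos (exp_pos _) (erfc_pos z)

lemma erfcx_antitone : Antitone erfcx := by
  have hderiv (z : ℝ) : HasDerivAt erfcx
      (exp (z ^ 2) * (2 * z) * erfc z + exp (z ^ 2) * -(2 / √π * exp (-(z ^ 2)))) z :=
    ((hasDerivAt_pow 2 z).exp.congr_deriv (by ring)).mul ((hasDerivAt_erf z).const_sub 1)
  refine antitone_of_deriv_nonpos (fun z => (hderiv z).differentiableAt) fun z => ?_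
  rw [(hderiv z).deriv]
  calc _ = 2 * exp (z ^ 2) * (z * erfc z) - 2 / √π * (exp (z ^ 2) * exp (-(z ^ 2))) := by ring
    _ ≤ 2 * exp (z ^ 2) * (exp (-(z ^ 2)) / √π) - 2 / √π * (exp (z ^ 2) * exp (-(z ^ 2))) := by
        gcongr; exact mul_erfc_le z
    _ = 0 := by ring

lemma StrictMono.continuousOn_of_continuousOn_comp {α β γ : Type*} [LinearOrder α]
    [TopologicalSpace α] [OrderTopology α] [PreconnectedSpace α] [LinearOrder β]
    [TopologicalSpace β] [OrderTopology β] [TopologicalSpace γ] {f : α → β} {g : γ → α}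
    {s : Set γ} (hf : StrictMono f) (hfc : Continuous f) (h : ContinuousOn (f ∘ g) s) :
    ContinuousOn g s :=
  (hf.isEmbedding_of_ordConnected (isPreconnected_range hfc).ordConnected).isInducing
    |>.continuousOn_iff.2 h

lemma StrictMonoOn.existsUnique_zero {F : ℝ → ℝ} {a b : ℝ} (hF : StrictMonoOn F (Ici a))
    (hFc : ContinuousOn F (Ici a)) (ha : F a < 0) (hab : a ≤ b) (hb : 0 ≤ F b) :
    ∃! x, a < x ∧ F x = 0 := by
  obtain ⟨x, ⟨hax, -⟩, hx⟩ := intermediate_value_Ioc hab (hFc.mono Icc_subset_Ici_self) ⟨ha, hb⟩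
  exact ⟨x, ⟨hax, hx⟩, fun y ⟨hay, hy⟩ => hF.injOn hay.le hax.le (hy.trans hx.symm)⟩

lemma strictMonoOn_mul_exp_sq_mul {f : ℝ → ℝ} {c : ℝ} (hf : StrictMonoOn f (Ici 0))
    (hf₀ : ∀ z ∈ Ici (0 : ℝ), 0 ≤ f z) (hc : 0 ≤ c) :
    StrictMonoOn (fun z => f z * exp (z ^ 2 * c)) (Ici 0) := by
  intro x hx y hy hxy
  have hx : (0 : ℝ) ≤ x := hx
  exact mul_lt_mul (hf hx hy hxy) (exp_le_exp.2 (by gcongr)) (exp_pos _) (hf₀ y hy)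

namespace Params

variable (p : Params) {h₀ Ainf z₀ : ℝ}

lemma α₁_pos : 0 < p.α₁ := div_pos p.hk₁ (mul_pos p.hρ p.hc₁)
lemma α₂_pos : 0 < p.α₂ := div_pos p.hk₂ (mul_pos p.hρ p.hc₂)
lemma α₃_pos : 0 < p.α₃ := div_pos p.hk₃ (mul_pos p.hρ p.hc₃)
lemma Ste₁_pos : 0 < p.Ste₁ := div_pos (mul_pos p.hc₁ (sub_pos.2 p.hCD)) p.hℓ₁
lemma Ste₂_pos : 0 < p.Ste₂ := div_pos (mul_pos p.hc₂ (sub_pos.2 p.hBC)) p.hℓ₂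

lemma φ_eq (z : ℝ) : p.φ z = z + p.Ste₁ / √π / erfcx z := by
  rw [φ, erfcx, exp_neg]
  field_simp

lemma φ_strictMono : StrictMono p.φ := by
  have hS : 0 ≤ p.Ste₁ / √π := by have := p.Ste₁_pos; positivity
  rw [funext p.φ_eq]
  exact strictMono_id.add_monotone fun x y hxy =>
    div_le_div_of_nonneg_left hS (erfcx_pos y) (erfcx_antitone hxy)

lemma φ_pos {z : ℝ} (hz : 0 ≤ z) : 0 < p.φ z := by
  have := p.Ste₁_pos
  have := erfcx_pos z
  rw [φ_eq]
  positivity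

lemma continuous_φ : Continuous p.φ :=
  continuous_id.add <| (by fun_prop : Continuous fun z => p.Ste₁ / √π * exp (-(z ^ 2))).div
    (continuous_const.sub continuous_erf) fun z => (erfc_pos z).ne'

lemma Q_strictMonoOn : StrictMonoOn p.Q (Ici 0) :=
  strictMonoOn_mul_exp_sq_mul
    ((p.φ_strictMono.const_mul (div_pos p.hℓ₁ p.hℓ₂)).strictMonoOn _)
    (fun _ hz => (mul_pos (div_pos p.hℓ₁ p.hℓ₂) (p.φ_pos hz)).le)
    (div_pos p.α₁_pos p.α₂_pos).le

lemma Q_pos {z : ℝ} (hz : 0 ≤ z) : 0 < p.Q z := by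
  have := p.φ_pos hz
  have := p.hℓ₁
  have := p.hℓ₂
  unfold Q
  positivity

lemma continuous_Q : Continuous p.Q := by
  have := p.continuous_φ
  unfold Q
  fun_prop

lemma mul_le_Q {z : ℝ} (hz : 0 ≤ z) : p.ℓ₁ / p.ℓ₂ * z ≤ p.Q z := by
  have hφ : z ≤ p.φ z := by
    have := p.Ste₁_pos
    have := erfcx_pos z
    rw [φ_eq]
    simp only [le_add_iff_nonneg_right]
    positivity
  have hexp : 1 ≤ exp (z ^ 2 * (p.α₁ / p.α₂)) :=
    one_le_exp (by have := p.α₁_pos; have := p.α₂_pos; positivity)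
  have := p.hℓ₁
  have := p.hℓ₂
  calc p.ℓ₁ / p.ℓ₂ * z ≤ p.ℓ₁ / p.ℓ₂ * p.φ z * 1 := by rw [mul_one]; gcongr
    _ ≤ p.Q z := by unfold Q; gcongr; exact (mul_pos (by positivity) (p.φ_pos hz)).le

lemma tendsto_Q_atTop : Tendsto p.Q atTop atTop :=
  tendsto_atTop_mono' _ (eventually_ge_atTop 0 |>.mono fun _ hz => p.mul_le_Q hz)
    (tendsto_id.const_mul_atTop (div_pos p.hℓ₁ p.hℓ₂))

/-- The ratio `ℓ₂/ℓ₁` in `H` cancels against `ℓ₁/ℓ₂` in `Q`, see `H_eq`. -/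
def κ : ℝ := p.Ste₂ / √π * √(p.k₂ * p.c₁ / (p.k₁ * p.c₂))

lemma κ_pos : 0 < p.κ := by
  have := p.Ste₂_pos
  have := p.hk₁; have := p.hk₂; have := p.hc₁; have := p.hc₂
  unfold κ
  positivity

lemma H_eq {z : ℝ} (hz : 0 ≤ z) : p.H z = erf (z * √(p.α₁ / p.α₂)) - p.κ / p.Q z := by
  have := p.φ_pos hz
  have := p.hℓ₁
  have := p.hℓ₂
  rw [H, Q, κ, neg_mul, exp_neg]
  field_simp

lemma sqrt_α₁_div_α₂_pos : 0 < √(p.α₁ / p.α₂) := sqrt_pos.2 (div_pos p.α₁_pos p.α₂_pos)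

lemma H_strictMonoOn : StrictMonoOn p.H (Ici 0) := by
  intro x hx y hy hxy
  have herf := erf_strictMono (mul_lt_mul_of_pos_right hxy p.sqrt_α₁_div_α₂_pos)
  have hQ := div_lt_div_of_pos_left p.κ_pos (p.Q_pos hx) (p.Q_strictMonoOn hx hy hxy)
  rw [p.H_eq hx, p.H_eq hy]
  linarith

lemma continuousOn_H : ContinuousOn p.H (Ici 0) :=
  ((continuous_erf.comp (continuous_mul_const _)).continuousOn.sub
    (continuousOn_const.div p.continuous_Q.continuousOn fun _ hz => (p.Q_pos hz).ne')).congr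
    fun _ hz => p.H_eq hz

lemma H_lt_erf {z : ℝ} (hz : 0 ≤ z) : p.H z < erf (z * √(p.α₁ / p.α₂)) := by
  rw [p.H_eq hz, sub_lt_self_iff]
  exact div_pos p.κ_pos (p.Q_pos hz)

lemma Q_eq_of_H_eq_zero (hz : 0 < z₀) (hH : p.H z₀ = 0) :
    p.Q z₀ = p.κ / erf (z₀ * √(p.α₁ / p.α₂)) := by
  rw [p.H_eq hz.le, sub_eq_zero] at hH
  rw [hH, div_div_cancel₀ p.κ_pos.ne']

lemma T_strictAntiOn (hα : p.α₃ ≤ p.α₂) (hAinf : p.B < Ainf) (hh₀ : 0 < h₀) :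
    StrictAntiOn (p.T h₀ Ainf) (Ici 0) := by
  intro x hx y hy hxy
  have hx : (0 : ℝ) ≤ x := hx
  have hβ : 0 ≤ 1 / p.α₃ - 1 / p.α₂ := sub_nonneg.2 (one_div_le_one_div_of_le p.α₃_pos hα)
  have hdecay : exp (-(y ^ 2) * p.α₁ * (1 / p.α₃ - 1 / p.α₂))
      ≤ exp (-(x ^ 2) * p.α₁ * (1 / p.α₃ - 1 / p.α₂)) := by
    have := p.α₁_pos
    gcongr
  have hd : 0 < p.k₃ / (h₀ * √(π * p.α₃)) := by
    have := p.hk₃; have := p.α₃_pos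
    positivity
  have hγ : 0 ≤ √(p.α₁ / p.α₃) := sqrt_nonneg _
  have hfrac := div_le_div₀ (exp_pos _).le hdecay
    (add_pos_of_pos_of_nonneg hd (erf_nonneg (mul_nonneg hx hγ)))
    (add_le_add_right (erf_strictMono.monotone (mul_le_mul_of_nonneg_right hxy.le hγ)) _)
  have hK : 0 ≤ p.Ste₂ / (√π * p.c₂) * ((Ainf - p.B) / (p.B - p.C)) *
      √(p.k₃ * p.c₁ * p.c₃ / p.k₁) := by
    have := p.Ste₂_pos; have := p.hc₂
    have : 0 < Ainf - p.B := sub_pos.2 hAinf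
    have : 0 < p.B - p.C := sub_pos.2 p.hBC
    positivity
  have hlin := strictMonoOn_mul_exp_sq_mul strictMonoOn_id (fun _ hz => hz)
    (div_pos p.α₁_pos p.α₂_pos).le hx hy hxy
  have := mul_le_mul_of_nonneg_left hfrac hK
  simp only [id] at hlin
  unfold T
  linarith

lemma continuousOn_T (hh₀ : 0 < h₀) : ContinuousOn (p.T h₀ Ainf) (Ici 0) := by
  have hd : 0 < p.k₃ / (h₀ * √(π * p.α₃)) := by
    have := p.hk₃; have := p.α₃_pos
    positivity
  have herf := continuous_erf.comp (continuous_mul_const √(p.α₁ / p.α₃))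
  refine ContinuousOn.sub (continuousOn_const.mul (ContinuousOn.div (by fun_prop)
    (continuous_const.add herf).continuousOn fun z hz => ?_)) (by fun_prop)
  exact (add_pos_of_pos_of_nonneg hd (erf_nonneg (mul_nonneg hz (sqrt_nonneg _)))).ne'

lemma h2_pos (hAinf : p.B < Ainf) (hz₀ : 0 < z₀) : 0 < p.h2 Ainf z₀ := by
  have := sub_pos.2 hAinf; have := sub_pos.2 p.hBC
  have := p.hk₂; have := p.hk₃; have := p.hc₂; have := p.hc₃; have := p.α₃_pos
  have := erf_pos (mul_pos hz₀ p.sqrt_α₁_div_α₂_pos)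
  unfold h2
  positivity

lemma sqrt_mul_sqrt_mul_sqrt :
    √(p.k₂ * p.k₃ * p.c₂ / (π * p.c₃ * p.α₃)) * √(p.k₃ * p.c₁ * p.c₃ / p.k₁) * √(π * p.α₃)
      = p.k₃ * p.c₂ * √(p.k₂ * p.c₁ / (p.k₁ * p.c₂)) := by
  have := p.hk₁; have := p.hk₂; have := p.hk₃; have := p.hc₁; have := p.hc₂; have := p.hc₃
  have := p.α₃_pos; have := pi_pos
  rw [← sqrt_mul (by positivity), ← sqrt_mul (by positivity),
    ← sqrt_sq (by positivity : 0 ≤ p.k₃ * p.c₂), ← sqrt_mul (by positivity)]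
  congr 1
  field_simp

/-- `T(0)` and `Q(z₀)` are the same multiple of `h₀` and of `h₂` respectively, so `h₀ > h₂`
says exactly that `Q(z₀) < T(0)`. -/
lemma Q_lt_T_zero (hAinf : p.B < Ainf) (hz₀ : 0 < z₀) (hH : p.H z₀ = 0)
    (hh₀ : p.h2 Ainf z₀ < h₀) : p.Q z₀ < p.T h₀ Ainf 0 := by
  have := p.Ste₂_pos; have := p.hc₂; have := p.hk₁; have := p.hk₃; have := p.hc₁; have := p.hc₃
  have := p.α₃_pos; have hAB := sub_pos.2 hAinf; have hBC := sub_pos.2 p.hBC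
  have hE := erf_pos (mul_pos hz₀ p.sqrt_α₁_div_α₂_pos)
  have hh₀pos := (p.h2_pos hAinf hz₀).trans hh₀
  set W := p.Ste₂ / (√π * p.c₂) * ((Ainf - p.B) / (p.B - p.C)) *
    √(p.k₃ * p.c₁ * p.c₃ / p.k₁) * (√(π * p.α₃) / p.k₃)
  have hW : 0 < W := by positivity
  have hT : p.T h₀ Ainf 0 = h₀ * W := by
    simp only [T, W, erf_zero, zero_mul, zero_pow two_ne_zero, neg_zero, exp_zero, add_zero,
      sub_zero]
    field_simp
  have hQ : p.Q z₀ = p.h2 Ainf z₀ * W := by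
    rw [p.Q_eq_of_H_eq_zero hz₀ hH]
    trans p.Ste₂ / (√π * p.c₂ * p.k₃ * erf (z₀ * √(p.α₁ / p.α₂))) *
      (√(p.k₂ * p.k₃ * p.c₂ / (π * p.c₃ * p.α₃)) * √(p.k₃ * p.c₁ * p.c₃ / p.k₁) * √(π * p.α₃))
    · rw [sqrt_mul_sqrt_mul_sqrt, κ]
      field_simp
    · simp only [h2, W]
      field_simp
  rw [hT, hQ]
  exact mul_lt_mul_of_pos_right hh₀ hW

lemma exists_continuousOn_erf_eq_H (hz₀ : 0 < z₀) (hH : p.H z₀ = 0) :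
    ∃ g : ℝ → ℝ, ContinuousOn g (Ici z₀) ∧ MonotoneOn g (Ici z₀) ∧
      ∀ x ∈ Ici z₀, 0 ≤ g x ∧ erf (g x * √(p.α₁ / p.α₂)) = p.H x := by
  have hψ := erf_strictMono.comp (strictMono_mul_right_of_pos p.sqrt_α₁_div_α₂_pos)
  have hψc := continuous_erf.comp (continuous_mul_const √(p.α₁ / p.α₂))
  have hex : ∀ x ∈ Ici z₀, ∃ t ∈ Icc 0 x, erf (t * √(p.α₁ / p.α₂)) = p.H x := fun x hx => by
    have hx₀ : 0 ≤ x := hz₀.le.trans hx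
    refine intermediate_value_Icc hx₀ hψc.continuousOn ⟨?_, (p.H_lt_erf hx₀).le⟩
    simpa [hH] using p.H_strictMonoOn.monotoneOn hz₀.le hx₀ hx
  choose! g hg hgH using hex
  refine ⟨g, hψ.continuousOn_of_continuousOn_comp hψc
    ((p.continuousOn_H.mono fun x hx => hz₀.le.trans hx).congr hgH),
    fun x hx y hy hxy => hψ.le_iff_le.1 ?_, fun x hx => ⟨(hg x hx).1, hgH x hx⟩⟩
  simp only [Function.comp, hgH x hx, hgH y hy]
  exact p.H_strictMonoOn.monotoneOn (hz₀.le.trans hx) (hz₀.le.trans hy) hxy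

lemma strictMonoOn_Q_sub_T_comp (hα : p.α₃ ≤ p.α₂) (hAinf : p.B < Ainf) (hh₀ : 0 < h₀)
    {g : ℝ → ℝ} {s : Set ℝ} (hs : s ⊆ Ici 0) (hg : MonotoneOn g s) (hg₀ : MapsTo g s (Ici 0)) :
    StrictMonoOn (fun x => p.Q x - p.T h₀ Ainf (g x)) s := fun x hx y hy hxy => by
  have hQ := p.Q_strictMonoOn (hs hx) (hs hy) hxy
  have hT := (p.T_strictAntiOn hα hAinf hh₀).antitoneOn (hg₀ hx) (hg₀ hy) (hg hx hy hxy.le)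
  dsimp only
  linarith

end Params

/-- existence and uniqueness for the reduced Robin problem:
if `α₂ > α₃`, `A∞ > B` and `h₀ > h₂`, there is a unique `ξ₁ > z₀` with `Q(ξ₁) = T(ξ₂)`,
where `ξ₂ ≥ 0` is the unique number with `erf(ξ₂√(α₁/α₂)) = H(ξ₁)`. -/
theorem robin_exists_unique (p : Params) (h₀ Ainf z₀ : ℝ)
    (hα : p.α₃ < p.α₂) (hAinf : p.B < Ainf)
    (hz₀ : 0 < z₀ ∧ p.H z₀ = 0)
    (hh₀ : p.h2 Ainf z₀ < h₀) :
    ∃! ξ₁ : ℝ, z₀ < ξ₁ ∧ ∃ ξ₂ : ℝ, 0 ≤ ξ₂ ∧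
      erf (ξ₂ * Real.sqrt (p.α₁ / p.α₂)) = p.H ξ₁ ∧
      p.Q ξ₁ = p.T h₀ Ainf ξ₂ := by
  obtain ⟨hz₀, hH⟩ := hz₀
  have hh₀pos : 0 < h₀ := (p.h2_pos hAinf hz₀).trans hh₀
  have hψ := erf_strictMono.comp (strictMono_mul_right_of_pos p.sqrt_α₁_div_α₂_pos)
  obtain ⟨g, hg_cont, hg_mono, hg⟩ := p.exists_continuousOn_erf_eq_H hz₀ hH
  have hg_z₀ : g z₀ = 0 := hψ.injective (by simp [(hg z₀ self_mem_Ici).2, hH])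
  set F := fun x => p.Q x - p.T h₀ Ainf (g x)
  have hF_z₀ : F z₀ < 0 := by simpa [F, hg_z₀] using p.Q_lt_T_zero hAinf hz₀ hH hh₀
  obtain ⟨b, hQb, hb⟩ := ((p.tendsto_Q_atTop.eventually_ge_atTop (p.T h₀ Ainf 0)).and
    (eventually_ge_atTop z₀)).exists
  have hF_b : 0 ≤ F b := sub_nonneg.2 <| hQb.trans' <|
    (p.T_strictAntiOn hα.le hAinf hh₀pos).antitoneOn self_mem_Ici (hg b hb).1 (hg b hb).1
  obtain ⟨ξ₁, ⟨hξ₁, hFξ₁⟩, huniq⟩ := StrictMonoOn.existsUnique_zero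
    (p.strictMonoOn_Q_sub_T_comp hα.le hAinf hh₀pos (fun x hx => hz₀.le.trans hx) hg_mono
      fun x hx => (hg x hx).1)
    (p.continuous_Q.continuousOn.sub
      ((p.continuousOn_T hh₀pos).comp hg_cont fun x hx => (hg x hx).1))
    hF_z₀ hb hF_b
  refine ⟨ξ₁, ⟨hξ₁, g ξ₁, (hg ξ₁ hξ₁.le).1, (hg ξ₁ hξ₁.le).2, sub_eq_zero.1 hFξ₁⟩, ?_⟩
  rintro y ⟨hy, t, -, ht, hQT⟩
  obtain rfl : t = g y := hψ.injective (ht.trans (hg y hy.le).2.symm)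
  exact huniq y ⟨hy, sub_eq_zero.2 hQT⟩
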